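/- Uniqueness of the risk-neutral proportion: for fixed K_p, K_c > 0 and μ_p, μ_c > 0, if μ_c/μ_p ≠ (1 − Φ(d_p))/Φ(d_c), then there exists a ∈ ℝ with h(a) < h(r); i.e., the average gain E X_T − e^{rT}X₀ of the options portfolio is negative for some appreciation rate a. -/

import Mathlib

open MeasureTheory ProbabilityTheory Real Set

/-- Standard normal CDF. -/
noncomputable def Phi (x : ℝ) : ℝ :=
  ∫ y in Set.Iic x, (Real.sqrt (2 * Real.pi))⁻¹ * Real.exp (-(y ^ 2) / 2)

/-- Standard normal density. -/
noncomputable def phi (y : ℝ) : ℝ := (Real.sqrt (2 * Real.pi))⁻¹ * Real.exp (-(y ^ 2) / 2)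

/-- Black-Scholes d value. -/
noncomputable def dBS (S₀ K r T σ : ℝ) : ℝ :=
  (Real.log (S₀ / K) + T * (r + σ ^ 2 / 2)) / (σ * Real.sqrt T)

/-- Black-Scholes call price (closed form). -/
noncomputable def callBS (S₀ K r T σ : ℝ) : ℝ :=
  S₀ * Phi (dBS S₀ K r T σ) - K * Real.exp (-(r * T)) * Phi (dBS S₀ K r T σ - σ * Real.sqrt T)

/-- Black-Scholes put price (via put-call parity). -/
noncomputable def putBS (S₀ K r T σ : ℝ) : ℝ :=
  callBS S₀ K r T σ - S₀ + K * Real.exp (-(r * T))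

/-!
Scaling the terminal price by `x = e^{(a-r)T}` gives `h(a) = G(x)`, where `G(x)` is the expected
payoff of the portfolio written on `x·S̃`. Differentiating under the expectation (the payoffs are
Lipschitz in `x` and `S̃` has no atoms), `G'(1) = e^{rT} S₀ (μ_c Φ(d_c) - μ_p (1 - Φ(d_p)))`:
the call contributes `E[S̃; S̃ > K_c] = e^{rT} S₀ Φ(d_c)` (a Gaussian change of measure), and by
put-call parity the put contributes `E[S̃; S̃ > K_p] - E[S̃] = e^{rT} S₀ (Φ(d_p) - 1)`. The ratio condition says exactly that `G'(1) ≠ 0`, so `r` is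
not a local minimum of `h`.
-/

open Filter

lemma gaussianPDFReal_zero_one : gaussianPDFReal 0 1 = phi := by
  funext x
  simp [gaussianPDFReal, phi]

lemma gaussianPDFReal_zero_one_mul_exp (b z : ℝ) :
    gaussianPDFReal 0 1 z * exp (b * z - b ^ 2 / 2) = phi (b - z) := by
  simp only [gaussianPDFReal_zero_one, phi, mul_assoc, ← exp_add]
  congr 2; ring

lemma setIntegral_Ioi_exp_mul_sub_gaussianReal (b c : ℝ) :
    ∫ z in Ioi c, exp (b * z - b ^ 2 / 2) ∂gaussianReal 0 1 = Phi (b - c) := by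
  have hsub : MeasurePreserving (b - ·) volume volume := volume.measurePreserving_sub_left b
  have hpre : (b - ·) ⁻¹' Iic (b - c) = Ici c := by ext z; simp
  rw [← integral_indicator measurableSet_Ioi, integral_gaussianReal_eq_integral_smul one_ne_zero]
  simp_rw [smul_eq_mul, ← indicator_mul_right]
  rw [integral_indicator measurableSet_Ioi]
  simp_rw [gaussianPDFReal_zero_one_mul_exp]
  rw [← integral_Ici_eq_integral_Ioi, ← hpre, hsub.setIntegral_preimage_emb
    (Homeomorph.subLeft b).measurableEmbedding phi]
  rfl

lemma integral_exp_mul_sub_gaussianReal (b : ℝ) :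
    ∫ z, exp (b * z - b ^ 2 / 2) ∂gaussianReal 0 1 = 1 := by
  have h := congrFun (mgf_id_gaussianReal (μ := 0) (v := 1)) b
  simp only [mgf, id, zero_mul, zero_add, NNReal.coe_one, one_mul] at h
  simp_rw [sub_eq_add_neg, exp_add]
  rw [integral_mul_const, h, ← exp_add, add_neg_cancel, exp_zero]

lemma Phi_pos (x : ℝ) : 0 < Phi x := by
  have hphi : Integrable phi := gaussianPDFReal_zero_one ▸ integrable_gaussianPDFReal 0 1
  have hsupp : Function.support phi = univ := by
    ext y
    simpa [← gaussianPDFReal_zero_one] using (gaussianPDFReal_pos 0 1 y one_ne_zero).ne'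
  show 0 < ∫ y in Iic x, phi y
  rw [setIntegral_pos_iff_support_of_nonneg_ae (ae_of_all _ fun y => ?_) hphi.integrableOn, hsupp,
    univ_inter]
  · simp
  · exact gaussianPDFReal_zero_one ▸ gaussianPDFReal_nonneg 0 1 y

lemma hasDerivAt_max_mul_sub_zero {w K x₀ : ℝ} (h : x₀ * w ≠ K) :
    HasDerivAt (fun x => max (x * w - K) 0) (if K < x₀ * w then w else 0) x₀ := by
  have hcont : Continuous fun x : ℝ => x * w := by fun_prop
  rcases h.lt_or_gt with hlt | hgt
  · rw [if_neg hlt.not_gt]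
    refine (hasDerivAt_const x₀ (0 : ℝ)).congr_of_eventuallyEq ?_
    filter_upwards [hcont.continuousAt.eventually (gt_mem_nhds hlt)] with x hx
    exact max_eq_right (by linarith)
  · rw [if_pos hgt]
    refine ((hasDerivAt_mul_const w).sub_const K).congr_of_eventuallyEq ?_
    filter_upwards [hcont.continuousAt.eventually (lt_mem_nhds hgt)] with x hx
    exact max_eq_left (by linarith)

lemma abs_max_mul_sub_zero_sub_le (w K x y : ℝ) :
    |max (x * w - K) 0 - max (y * w - K) 0| ≤ |w| * |x - y| :=
  calc |max (x * w - K) 0 - max (y * w - K) 0| ≤ |x * w - K - (y * w - K)| :=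
        abs_max_sub_max_le_abs _ _ _
    _ = |w| * |x - y| := by rw [← abs_mul]; ring_nf

section Payoff

variable {Ω : Type*} [MeasurableSpace Ω] {μ : Measure Ω} [IsFiniteMeasure μ] {W : Ω → ℝ}
  {K x₀ : ℝ}

theorem hasDerivAt_integral_max_mul_sub (hW : Measurable W) (hWi : Integrable W μ)
    (hK : μ {z | x₀ * W z = K} = 0) :
    HasDerivAt (fun x => ∫ z, max (x * W z - K) 0 ∂μ) (∫ z in {z | K < x₀ * W z}, W z ∂μ) x₀ := by
  have hs : MeasurableSet {z | K < x₀ * W z} := measurableSet_lt measurable_const (by fun_prop)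
  rw [← integral_indicator hs]
  refine (hasDerivAt_integral_of_dominated_loc_of_lip (bound := W) univ_mem
    (Eventually.of_forall fun x => (by fun_prop : Measurable _).aestronglyMeasurable)
    ((hWi.const_mul x₀).sub (integrable_const K)).pos_part
    (hW.indicator hs).aestronglyMeasurable
    (ae_of_all _ fun z => lipschitzOnWith_iff_dist_le_mul.2 fun x _ y _ => ?_) hWi ?_).2
  · simpa [Real.dist_eq] using abs_max_mul_sub_zero_sub_le (W z) K x y
  · filter_upwards [measure_eq_zero_iff_ae_notMem.1 hK] with z hz
    simpa [indicator_apply] using hasDerivAt_max_mul_sub_zero hz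

theorem hasDerivAt_integral_max_sub_mul (hW : Measurable W) (hWi : Integrable W μ)
    (hK : μ {z | x₀ * W z = K} = 0) :
    HasDerivAt (fun x => ∫ z, max (K - x * W z) 0 ∂μ)
      ((∫ z in {z | K < x₀ * W z}, W z ∂μ) - ∫ z, W z ∂μ) x₀ := by
  have hcall := hasDerivAt_integral_max_mul_sub hW hWi hK
  have hparity : ∀ x, ∫ z, max (K - x * W z) 0 ∂μ =
      (∫ z, max (x * W z - K) 0 ∂μ) - (x * ∫ z, W z ∂μ - μ.real univ * K) := by
    intro x
    have hlin : Integrable (fun z => x * W z - K) μ := (hWi.const_mul x).sub (integrable_const K)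
    rw [← integral_const_mul, ← smul_eq_mul (μ.real univ), ← integral_const,
      ← integral_sub (hWi.const_mul x) (integrable_const K), ← integral_sub hlin.pos_part hlin]
    congr 1; funext z
    grind
  simp_rw [hparity]
  exact hcall.sub (((hasDerivAt_id x₀).mul_const _).sub_const _) |>.congr_deriv (by simp)

end Payoff

noncomputable def stockPrice (S₀ r T σ z : ℝ) : ℝ :=
  S₀ * exp (r * T - σ ^ 2 * T / 2 + σ * √T * z)

section StockPrice

variable {S₀ r T σ : ℝ}

lemma stockPrice_eq (hT : 0 ≤ T) (z : ℝ) :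
    stockPrice S₀ r T σ z = S₀ * exp (r * T) * exp (σ * √T * z - (σ * √T) ^ 2 / 2) := by
  rw [stockPrice, mul_assoc S₀, ← exp_add, mul_pow, sq_sqrt hT]
  ring_nf

lemma measurable_stockPrice : Measurable (stockPrice S₀ r T σ) := by
  unfold stockPrice; fun_prop

lemma integrable_stockPrice (hT : 0 ≤ T) : Integrable (stockPrice S₀ r T σ) (gaussianReal 0 1) := by
  have h := (integrable_exp_mul_gaussianReal (μ := 0) (v := 1) (σ * √T)).const_mul
    (S₀ * exp (r * T) * exp (-((σ * √T) ^ 2 / 2)))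
  refine h.congr (ae_of_all _ fun z => ?_)
  simp only [stockPrice_eq hT, sub_eq_add_neg, exp_add]
  ring

lemma integral_stockPrice (hT : 0 ≤ T) :
    ∫ z, stockPrice S₀ r T σ z ∂gaussianReal 0 1 = S₀ * exp (r * T) := by
  simp_rw [stockPrice_eq hT]
  rw [integral_const_mul, integral_exp_mul_sub_gaussianReal, mul_one]

lemma strictMono_stockPrice (hS : 0 < S₀) (hσ : 0 < σ) (hT : 0 < T) :
    StrictMono (stockPrice S₀ r T σ) := fun z w hzw => by
  unfold stockPrice
  gcongr

lemma setOf_lt_stockPrice {K : ℝ} (hS : 0 < S₀) (hK : 0 < K) (hσ : 0 < σ) (hT : 0 < T) :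
    {z | K < stockPrice S₀ r T σ z} = Ioi (σ * √T - dBS S₀ K r T σ) := by
  have hb : 0 < σ * √T := mul_pos hσ (sqrt_pos.2 hT)
  have hd : σ * √T - dBS S₀ K r T σ = (log (K / S₀) - (r * T - σ ^ 2 * T / 2)) / (σ * √T) := by
    rw [dBS, log_div hK.ne' hS.ne', log_div hS.ne' hK.ne']
    field_simp
    rw [sq_sqrt hT.le]
    ring
  ext z
  rw [mem_ofPred_eq, mem_Ioi, stockPrice, ← div_lt_iff₀' hS, ← log_lt_iff_lt_exp (div_pos hK hS),
    hd, div_lt_iff₀ hb]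
  constructor <;> intro <;> linarith

lemma setIntegral_lt_stockPrice {K : ℝ} (hS : 0 < S₀) (hK : 0 < K) (hσ : 0 < σ) (hT : 0 < T) :
    ∫ z in {z | K < stockPrice S₀ r T σ z}, stockPrice S₀ r T σ z ∂gaussianReal 0 1 =
      S₀ * exp (r * T) * Phi (dBS S₀ K r T σ) := by
  simp_rw [setOf_lt_stockPrice hS hK hσ hT, stockPrice_eq hT.le]
  rw [integral_const_mul, setIntegral_Ioi_exp_mul_sub_gaussianReal, sub_sub_cancel]

lemma gaussianReal_setOf_stockPrice_eq {K : ℝ} (hS : 0 < S₀) (hσ : 0 < σ) (hT : 0 < T) :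
    gaussianReal 0 1 {z | stockPrice S₀ r T σ z = K} = 0 := by
  have := nullSingletonClass_gaussianReal (μ := 0) one_ne_zero
  refine Set.Subsingleton.measure_zero (fun z hz w hw => ?_) _
  exact (strictMono_stockPrice hS hσ hT).injective (hz.trans hw.symm)

end StockPrice

section OptionDerivatives

variable {S₀ r T σ K : ℝ}

theorem hasDerivAt_integral_call_stockPrice (hS : 0 < S₀) (hK : 0 < K) (hσ : 0 < σ) (hT : 0 < T) :
    HasDerivAt (fun x => ∫ z, max (x * stockPrice S₀ r T σ z - K) 0 ∂gaussianReal 0 1)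
      (S₀ * exp (r * T) * Phi (dBS S₀ K r T σ)) 1 := by
  have h := hasDerivAt_integral_max_mul_sub (x₀ := 1) (K := K) (measurable_stockPrice (r := r))
    (integrable_stockPrice hT.le) (by simpa using gaussianReal_setOf_stockPrice_eq hS hσ hT)
  simpa [setIntegral_lt_stockPrice hS hK hσ hT] using h

theorem hasDerivAt_integral_put_stockPrice (hS : 0 < S₀) (hK : 0 < K) (hσ : 0 < σ) (hT : 0 < T) :
    HasDerivAt (fun x => ∫ z, max (K - x * stockPrice S₀ r T σ z) 0 ∂gaussianReal 0 1)
      (S₀ * exp (r * T) * (Phi (dBS S₀ K r T σ) - 1)) 1 := by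
  have h := hasDerivAt_integral_max_sub_mul (x₀ := 1) (K := K) (measurable_stockPrice (r := r))
    (integrable_stockPrice hT.le) (by simpa using gaussianReal_setOf_stockPrice_eq hS hσ hT)
  rw [mul_sub, mul_one]
  simpa [setIntegral_lt_stockPrice hS hK hσ hT, integral_stockPrice hT.le] using h

end OptionDerivatives

theorem stmt8_general (S₀ Kp Kc σ T r μp μc : ℝ) (hS : 0 < S₀) (hKp : 0 < Kp) (hKc : 0 < Kc)
    (hσ : 0 < σ) (hT : 0 < T) (hμp : 0 < μp)
    (h : ℝ → ℝ)
    (hh : ∀ a : ℝ, h a =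
      μp * (∫ z, max (Kp - Real.exp ((a - r) * T) *
              (S₀ * Real.exp (r * T - σ ^ 2 * T / 2 + σ * Real.sqrt T * z))) 0
            ∂(gaussianReal 0 1)) +
      μc * (∫ z, max (Real.exp ((a - r) * T) *
              (S₀ * Real.exp (r * T - σ ^ 2 * T / 2 + σ * Real.sqrt T * z)) - Kc) 0
            ∂(gaussianReal 0 1)))
    (hratio : μc / μp ≠ (1 - Phi (dBS S₀ Kp r T σ)) / Phi (dBS S₀ Kc r T σ)) :
    ∃ a : ℝ, h a < h r := by
  set A := S₀ * exp (r * T)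
  set Φp := Phi (dBS S₀ Kp r T σ)
  set Φc := Phi (dBS S₀ Kc r T σ)
  set G : ℝ → ℝ := fun x => μp * (∫ z, max (Kp - x * stockPrice S₀ r T σ z) 0 ∂gaussianReal 0 1)
      + μc * ∫ z, max (x * stockPrice S₀ r T σ z - Kc) 0 ∂gaussianReal 0 1
  have hG : HasDerivAt G (μp * (A * (Φp - 1)) + μc * (A * Φc)) 1 :=
    ((hasDerivAt_integral_put_stockPrice hS hKp hσ hT).const_mul μp).add
      ((hasDerivAt_integral_call_stockPrice hS hKc hσ hT).const_mul μc)
  have hscale : HasDerivAt (fun a => exp ((a - r) * T)) T r :=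
    (((hasDerivAt_id r).sub_const r).mul_const T).exp.congr_deriv (by simp)
  have hderiv : HasDerivAt h ((μp * (A * (Φp - 1)) + μc * (A * Φc)) * T) r :=
    (funext hh : h = G ∘ fun a => exp ((a - r) * T)) ▸ hG.comp_of_eq r hscale (by simp)
  have hslope : (μp * (A * (Φp - 1)) + μc * (A * Φc)) * T ≠ 0 := by
    refine mul_ne_zero (fun hzero => hratio ?_) hT.ne'
    have hbalance : A * (μc * Φc - μp * (1 - Φp)) = 0 := by linear_combination hzero
    rw [div_eq_div_iff hμp.ne' (Phi_pos _).ne']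
    linarith [(mul_eq_zero.1 hbalance).resolve_left (by positivity)]
  by_contra! hmin
  have hlocal : IsLocalMin h r := Eventually.of_forall hmin
  exact hslope (hlocal.hasDerivAt_eq_zero hderiv)

theorem stmt8 (S₀ Kp Kc σ T r μp μc : ℝ) (hS : 0 < S₀) (hKp : 0 < Kp) (hKc : 0 < Kc)
    (hσ : 0 < σ) (hT : 0 < T) (hr : 0 ≤ r) (hμp : 0 < μp) (hμc : 0 < μc)
    (h : ℝ → ℝ)
    (hh : ∀ a : ℝ, h a =
      μp * (∫ z, max (Kp - Real.exp ((a - r) * T) *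
              (S₀ * Real.exp (r * T - σ ^ 2 * T / 2 + σ * Real.sqrt T * z))) 0
            ∂(gaussianReal 0 1)) +
      μc * (∫ z, max (Real.exp ((a - r) * T) *
              (S₀ * Real.exp (r * T - σ ^ 2 * T / 2 + σ * Real.sqrt T * z)) - Kc) 0
            ∂(gaussianReal 0 1)))
    (hratio : μc / μp ≠ (1 - Phi (dBS S₀ Kp r T σ)) / Phi (dBS S₀ Kc r T σ)) :
    ∃ a : ℝ, h a < h r :=
  stmt8_general S₀ Kp Kc σ T r μp μc hS hKp hKc hσ hT hμp h hh hratio
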